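/- Let f, g : [a,b] → ℝ where f satisfies m ≤ f(x) ≤ M a.e. on [a,b] and g is integrable on [a,b]. Then |(1/(b−a))∫_a^b f(x)g(x) dx − (1/(b−a))∫_a^b f(x) dx · (1/(b−a))∫_a^b g(x) dx| ≤ (1/2)(M−m) · (1/(b−a)) ∫_a^b |g(x) − (1/(b−a))∫_a^b g(y) dy| dx. -/

import Mathlib

open MeasureTheory Set

theorem gruss_type_L1
    (a b m M : ℝ) (f g : ℝ → ℝ) (hab : a < b)
    (hfmeas : Measurable f)
    (hbound : ∀ᵐ x ∂volume, x ∈ Icc a b → m ≤ f x ∧ f x ≤ M)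
    (hg : IntervalIntegrable g volume a b) :
    |(1 / (b - a)) * ∫ x in a..b, f x * g x -
      (1 / (b - a)) * (∫ x in a..b, f x) * ((1 / (b - a)) * ∫ x in a..b, g x)| ≤
    (1 / 2) * (M - m) * ((1 / (b - a)) *
      ∫ x in a..b, |g x - (1 / (b - a)) * ∫ y in a..b, g y|) := by
  have hle : a ≤ b := hab.le
  have hba : (0:ℝ) < b - a := by linarith
  set c : ℝ := (1 / (b - a)) * ∫ x in a..b, g x with hc
  have hgI : IntegrableOn g (Ioc a b) volume := hg.1
  have hvol : volume (Ioc a b) < ⊤ := by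
    rw [Real.volume_Ioc]; exact ENNReal.ofReal_lt_top
  have hconst : ∀ (d : ℝ), IntegrableOn (fun _ => d) (Ioc a b) volume := fun d =>
    integrableOn_const hvol.ne
  have hboundI : ∀ᵐ x ∂(volume.restrict (Ioc a b)), m ≤ f x ∧ f x ≤ M := by
    rw [ae_restrict_iff' measurableSet_Ioc]
    filter_upwards [hbound] with x hx hxI
    exact hx (Ioc_subset_Icc_self hxI)
  have hfI : IntegrableOn f (Ioc a b) volume := by
    refine Integrable.mono' (hconst (max |m| |M|)) hfmeas.aestronglyMeasurable ?_
    filter_upwards [hboundI] with x hx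
    rw [Real.norm_eq_abs]
    exact abs_le_max_abs_abs hx.1 hx.2
  have hfbd : ∀ᵐ x ∂(volume.restrict (Ioc a b)), ‖f x‖ ≤ max |m| |M| := by
    filter_upwards [hboundI] with x hx
    rw [Real.norm_eq_abs]
    exact abs_le_max_abs_abs hx.1 hx.2
  have hfgI : IntegrableOn (fun x => f x * g x) (Ioc a b) volume :=
    Integrable.bdd_mul hgI hfmeas.aestronglyMeasurable hfbd
  have hsub : IntegrableOn (fun x => g x - c) (Ioc a b) volume := hgI.sub (hconst c)
  have hfsub : IntegrableOn (fun x => f x * (g x - c)) (Ioc a b) volume :=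
    Integrable.bdd_mul hsub hfmeas.aestronglyMeasurable hfbd
  have hint_c : ∫ _x in Ioc a b, (c:ℝ) = (b - a) * c := by
    simp [Real.volume_Ioc, ENNReal.toReal_ofReal hba.le, hle]
  have hgeq : ∫ x in a..b, g x = ∫ x in Ioc a b, g x := intervalIntegral.integral_of_le hle
  have hzero : ∫ x in Ioc a b, (g x - c) = 0 := by
    rw [integral_sub hgI (hconst c), hint_c, hc, hgeq]
    field_simp
    ring
  have key : |∫ x in Ioc a b, f x * (g x - c)| ≤
      (M - m) / 2 * ∫ x in Ioc a b, |g x - c| := by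
    have h1 : ∫ x in Ioc a b, f x * (g x - c)
        = ∫ x in Ioc a b, (f x - (m + M)/2) * (g x - c) := by
      have hrw : ∀ x, (f x - (m+M)/2) * (g x - c)
          = f x * (g x - c) - (m+M)/2 * (g x - c) := by intro x; ring
      simp_rw [hrw]
      rw [integral_sub hfsub (hsub.const_mul _), integral_const_mul, hzero]
      ring
    have hbound2 : ∀ᵐ x ∂(volume.restrict (Ioc a b)),
        ‖(f x - (m+M)/2) * (g x - c)‖ ≤ (M - m)/2 * |g x - c| := by
      filter_upwards [hboundI] with x hx
      rw [Real.norm_eq_abs, abs_mul]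
      have h3 : |f x - (m+M)/2| ≤ (M - m)/2 := by
        rw [abs_le]; constructor <;> linarith [hx.1, hx.2]
      exact mul_le_mul_of_nonneg_right h3 (abs_nonneg _)
    have hbint : Integrable (fun x => (M - m)/2 * |g x - c|)
        (volume.restrict (Ioc a b)) := (hsub.abs).const_mul _
    calc |∫ x in Ioc a b, f x * (g x - c)|
        = ‖∫ x in Ioc a b, (f x - (m+M)/2) * (g x - c)‖ := by
          rw [h1, Real.norm_eq_abs]
      _ ≤ ∫ x in Ioc a b, (M - m)/2 * |g x - c| :=
          norm_integral_le_of_norm_le hbint hbound2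
      _ = (M - m)/2 * ∫ x in Ioc a b, |g x - c| := integral_const_mul _ _
  -- now rewrite the goal
  have hsplit : ∫ x in Ioc a b, f x * (g x - c)
      = (∫ x in Ioc a b, f x * g x) - c * ∫ x in Ioc a b, f x := by
    have hrw : ∀ x, f x * (g x - c) = f x * g x - c * f x := by intro x; ring
    simp_rw [hrw]
    rw [integral_sub hfgI (hfI.const_mul _), integral_const_mul]
  simp only [intervalIntegral.integral_of_le hle]
  have hs2 : ∫ x in Ioc a b, (f x * g x - (1/(b-a) * ∫ x in Ioc a b, f x) * c)
      = ∫ x in Ioc a b, f x * (g x - c) := by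
    rw [integral_sub hfgI (hconst _), hsplit]
    have hcst : ∫ _x in Ioc a b, ((1/(b-a) * ∫ x in Ioc a b, f x) * c)
        = (b-a) * ((1/(b-a) * ∫ x in Ioc a b, f x) * c) := by
      simp [Real.volume_Ioc, ENNReal.toReal_ofReal hba.le, hle]
    rw [hcst]
    field_simp
  rw [hs2, abs_mul, abs_of_pos (by positivity : (0:ℝ) < 1/(b-a))]
  calc (1/(b-a)) * |∫ x in Ioc a b, f x * (g x - c)|
      ≤ (1/(b-a)) * ((M - m)/2 * ∫ x in Ioc a b, |g x - c|) :=
        mul_le_mul_of_nonneg_left key (by positivity)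
    _ = 1/2 * (M - m) * ((1/(b-a)) * ∫ x in Ioc a b, |g x - c|) := by ring
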